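/- arXiv:1701.04779 — 2 statements merged into one kernel-verified Lean document; each statement's English description precedes it below -/
import Mathlib

section
/- Let V be a finite-dimensional real normed vector space, v : V → V a locally Lipschitz map, and φ : ℝ → V → V a global flow of v; that is, φ(0, ·) is the identity, φ(s+t, x) = φ(s, φ(t, x)) for all s, t ∈ ℝ and x ∈ V, each map φ(t, ·) : V → V is continuous, and for every x ∈ V the curve t ↦ φ(t, x) is differentiable with derivative v(φ(t, x)) at every t. Let ν be a finite Borel measure on V such that v(x) = 0 for ν-almost every x ∈ V. Then for every t ∈ ℝ the pushforward measure φ(t, ·)_* ν equals ν. -/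
/-!
A zero of a locally Lipschitz vector field is a stationary point: by local uniqueness of ODE
solutions, the set of times at which an integral curve sits at the zero is open, and it is
closed, so it is all of `ℝ` once it is nonempty. Hence each time-`t` map of the flow agrees
with the identity `ν`-almost everywhere, and pushing `ν` forward along it changes nothing.
-/

open MeasureTheory Filter Topology

theorem LocallyLipschitz.eventuallyEq_const_of_hasDerivAt {E : Type*} [NormedAddCommGroup E]
    [NormedSpace ℝ E] {v : E → E} (hv : LocallyLipschitz v) {f : ℝ → E}
    (hf : ∀ t, HasDerivAt f (v (f t)) t) {x₀ : E} (hx₀ : v x₀ = 0) {t₀ : ℝ} (ht₀ : f t₀ = x₀) :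
    f =ᶠ[𝓝 t₀] fun _ => x₀ := by
  obtain ⟨K, s, hs, hK⟩ := hv x₀
  refine ODE_solution_unique_of_eventually (v := fun _ => v) (s := fun _ => s)
    (.of_forall fun _ => hK) ?_ (.of_forall fun t => ⟨?_, mem_of_mem_nhds hs⟩) ht₀
  · have hfs : ∀ᶠ t in 𝓝 t₀, f t ∈ s :=
      (hf t₀).continuousAt.preimage_mem_nhds (ht₀ ▸ hs)
    filter_upwards [hfs] with t ht using ⟨hf t, ht⟩
  · simpa [hx₀] using hasDerivAt_const t x₀

theorem LocallyLipschitz.eq_of_hasDerivAt_of_apply_eq_zero {E : Type*} [NormedAddCommGroup E]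
    [NormedSpace ℝ E] {v : E → E} (hv : LocallyLipschitz v) {f : ℝ → E}
    (hf : ∀ t, HasDerivAt f (v (f t)) t) {x₀ : E} (hx₀ : v x₀ = 0) {t₀ : ℝ} (ht₀ : f t₀ = x₀)
    (t : ℝ) : f t = x₀ := by
  have hclopen : IsClopen {t | f t = x₀} :=
    ⟨isClosed_eq (continuous_iff_continuousAt.2 fun t => (hf t).continuousAt) continuous_const,
      isOpen_iff_mem_nhds.2 fun _ ht => hv.eventuallyEq_const_of_hasDerivAt hf hx₀ ht⟩
  exact Set.eq_univ_iff_forall.1 (hclopen.eq_univ ⟨t₀, ht₀⟩) t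

theorem stmt_1_general {V : Type*} [NormedAddCommGroup V] [NormedSpace ℝ V]
    [MeasurableSpace V]
    (v : V → V) (hv : LocallyLipschitz v)
    (φ : ℝ → V → V)
    (hφ0 : ∀ x, φ 0 x = x)
    (hφderiv : ∀ x : V, ∀ t : ℝ, HasDerivAt (fun τ => φ τ x) (v (φ t x)) t)
    (ν : Measure V)
    (hν : ∀ᵐ x ∂ν, v x = 0) :
    ∀ t : ℝ, Measure.map (φ t) ν = ν := by
  intro t
  have hfix : ∀ x, v x = 0 → φ t x = x := fun x hx =>
    hv.eq_of_hasDerivAt_of_apply_eq_zero (hφderiv x) hx (hφ0 x) t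
  rw [Measure.map_congr (hν.mono hfix), Measure.map_id']

/-- If `v` is a locally Lipschitz vector field on a finite-dimensional real normed space,
`φ` is a global flow of `v`, and `ν` is a finite Borel measure with `v = 0` ν-a.e.,
then every time-`t` map of the flow preserves `ν`. -/
theorem stmt_1 {V : Type*} [NormedAddCommGroup V] [NormedSpace ℝ V] [FiniteDimensional ℝ V]
    [MeasurableSpace V] [BorelSpace V]
    (v : V → V) (hv : LocallyLipschitz v)
    (φ : ℝ → V → V)
    (hφ0 : ∀ x, φ 0 x = x)
    (hφadd : ∀ s t : ℝ, ∀ x, φ (s + t) x = φ s (φ t x))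
    (hφcont : ∀ t : ℝ, Continuous (φ t))
    (hφderiv : ∀ x : V, ∀ t : ℝ, HasDerivAt (fun τ => φ τ x) (v (φ t x)) t)
    (ν : Measure V) [IsFiniteMeasure ν]
    (hν : ∀ᵐ x ∂ν, v x = 0) :
    ∀ t : ℝ, Measure.map (φ t) ν = ν :=
  stmt_1_general v hv φ hφ0 hφderiv ν hν
end

section
/- Let 𝔤 be a real Lie algebra that, as a vector space, decomposes as a direct sum 𝔤 = 𝔨 ⊕ 𝔭 of subspaces satisfying [𝔨,𝔨] ⊆ 𝔨, [𝔨,𝔭] ⊆ 𝔭 and [𝔭,𝔭] ⊆ 𝔨. Let B : 𝔤 × 𝔤 → ℝ be a symmetric bilinear form that is invariant (B([x,y],z) + B(y,[x,z]) = 0 for all x, y, z ∈ 𝔤), negative definite on 𝔨, positive definite on 𝔭, and satisfies B(ξ,η) = 0 for all ξ ∈ 𝔨 and η ∈ 𝔭. If β₀ ∈ 𝔭 satisfies [β₀, ξ] = 0 for every ξ ∈ 𝔨, then [β₀, x] = 0 for every x ∈ 𝔤. -/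
/-!
Since `[𝔭, 𝔭] ⊆ 𝔨`, for `η ∈ 𝔭` the bracket `ζ = [β₀, η]` lies in `𝔨` and is therefore killed by
`ad β₀`; invariance then gives `B(ζ, ζ) = -B(η, [β₀, ζ]) = 0`, so `ζ = 0` by definiteness of `B`
on `𝔨`. Thus `ad β₀` vanishes on `𝔨` and on `𝔭`, hence on `𝔨 ⊕ 𝔭 = 𝔤`.
-/

theorem bilin_lie_self_eq_zero_of_lie_lie_eq_zero {R L : Type*} [CommSemiring R] [LieRing L]
    [Module R L] (B : LinearMap.BilinForm R L)
    (hinv : ∀ x y z : L, B ⁅x, y⁆ z + B y ⁅x, z⁆ = 0) {x y : L} (h : ⁅x, ⁅x, y⁆⁆ = 0) :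
    B ⁅x, y⁆ ⁅x, y⁆ = 0 := by
  simpa [h] using hinv x y ⁅x, y⁆

theorem lie_eq_zero_of_codisjoint {R L : Type*} [Semiring R] [LieRing L] [Module R L]
    {k p : Submodule R L} (hkp : Codisjoint k p) {x : L} (hk : ∀ y ∈ k, ⁅x, y⁆ = 0)
    (hp : ∀ y ∈ p, ⁅x, y⁆ = 0) (y : L) : ⁅x, y⁆ = 0 := by
  obtain ⟨a, ha, b, hb, rfl⟩ := Submodule.mem_sup.mp (hkp.eq_top ▸ Submodule.mem_top : y ∈ k ⊔ p)
  rw [lie_add, hk a ha, hp b hb, add_zero]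

theorem stmt_2_general {L : Type*} [LieRing L] [LieAlgebra ℝ L]
    (k p : Submodule ℝ L) (hcompl : IsCompl k p)
    (hpp : ∀ x ∈ p, ∀ y ∈ p, ⁅x, y⁆ ∈ k)
    (B : LinearMap.BilinForm ℝ L)
    (hinv : ∀ x y z : L, B ⁅x, y⁆ z + B y ⁅x, z⁆ = 0)
    (hkneg : ∀ x ∈ k, x ≠ 0 → B x x < 0)
    (β₀ : L) (hβ₀ : β₀ ∈ p) (hcomm : ∀ ξ ∈ k, ⁅β₀, ξ⁆ = 0) :
    ∀ x : L, ⁅β₀, x⁆ = 0 := by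
  have hp : ∀ η ∈ p, ⁅β₀, η⁆ = 0 := by
    intro η hη
    have hmem : ⁅β₀, η⁆ ∈ k := hpp β₀ hβ₀ η hη
    by_contra hne
    exact (hkneg _ hmem hne).ne (bilin_lie_self_eq_zero_of_lie_lie_eq_zero B hinv (hcomm _ hmem))
  exact lie_eq_zero_of_codisjoint hcompl.codisjoint hcomm hp

/-- If `𝔤 = 𝔨 ⊕ 𝔭` is a vector-space direct sum with `[𝔨,𝔨] ⊆ 𝔨`, `[𝔨,𝔭] ⊆ 𝔭`,
`[𝔭,𝔭] ⊆ 𝔨`, and `B` is an invariant symmetric bilinear form, negative definite on `𝔨`,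
positive definite on `𝔭`, with `B(𝔨,𝔭) = 0`, then any `β₀ ∈ 𝔭` centralizing `𝔨`
centralizes all of `𝔤`. -/
theorem stmt_2 {L : Type*} [LieRing L] [LieAlgebra ℝ L]
    (k p : Submodule ℝ L) (hcompl : IsCompl k p)
    (hkk : ∀ x ∈ k, ∀ y ∈ k, ⁅x, y⁆ ∈ k)
    (hkp : ∀ x ∈ k, ∀ y ∈ p, ⁅x, y⁆ ∈ p)
    (hpp : ∀ x ∈ p, ∀ y ∈ p, ⁅x, y⁆ ∈ k)
    (B : LinearMap.BilinForm ℝ L)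
    (hsymm : ∀ x y : L, B x y = B y x)
    (hinv : ∀ x y z : L, B ⁅x, y⁆ z + B y ⁅x, z⁆ = 0)
    (hkneg : ∀ x ∈ k, x ≠ 0 → B x x < 0)
    (hppos : ∀ x ∈ p, x ≠ 0 → 0 < B x x)
    (horth : ∀ ξ ∈ k, ∀ η ∈ p, B ξ η = 0)
    (β₀ : L) (hβ₀ : β₀ ∈ p) (hcomm : ∀ ξ ∈ k, ⁅β₀, ξ⁆ = 0) :
    ∀ x : L, ⁅β₀, x⁆ = 0 :=
  stmt_2_general k p hcompl hpp B hinv hkneg β₀ hβ₀ hcomm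
end
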